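/- arXiv:1203.1714 — 2 statements merged into one kernel-verified Lean document; each statement's English description precedes it below -/
import Mathlib

section
/- Let x̄ ∈ ℝⁿ (n = N·D) be a block-sparse signal with block support T ⊆ {1,…,N} (i.e., x̄ₖ = 0 for every block index k ∉ T), let A ∈ ℝ^{m×n} have full row rank, and let α > 0 satisfy 1/α < ‖x̄ₖ‖ for every k ∈ T. Set d = min_{k∈T} min(1/α, ‖x̄ₖ‖ − 1/α), let y = A x̄ + v for some noise vector v ∈ ℝ^m, and let L = {x ∈ ℝⁿ : A x = y}. Suppose A_T has full column rank. If x̂ minimizes J(x) = Σ_{k=1}^{N} F_α(‖xₖ‖) over the region L ∩ B(x̄, d), then ‖x̂ − x̄‖ ≤ 2√N (1 + ‖A_T† A_{T^c}‖) ‖A† v‖ + ‖A_T† v‖, where ‖A_T† A_{T^c}‖ denotes the ℓ₂ operator norm. -/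
open scoped BigOperators
open Matrix

noncomputable section

/-- The Euclidean (`ℓ₂`) norm of a finitely-indexed real vector. -/
def l2norm {ι : Type*} [Fintype ι] (x : ι → ℝ) : ℝ :=
  Real.sqrt (∑ i, (x i) ^ 2)

/-- The `ℓ₂` operator norm of a real matrix. -/
def l2opNorm {ι κ : Type*} [Fintype ι] [Fintype κ] [DecidableEq κ] (M : Matrix ι κ ℝ) : ℝ :=
  ‖LinearMap.toContinuousLinearMap (Matrix.toEuclideanLin M)‖

/-- The approximation `F_α` to the indicator of nonzeroness. -/
def Fa (α w : ℝ) : ℝ :=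
  if |w| ≤ 1 / α then 2 * α * |w| - α ^ 2 * w ^ 2 else 1

/-- The `k`-th block (of length `D`) of a block vector. -/
def blk {N D : ℕ} (x : Fin N × Fin D → ℝ) (k : Fin N) : Fin D → ℝ :=
  fun j => x (k, j)

/-- The cost function `J(x) = ∑ₖ F_α(‖xₖ‖)`. -/
def J {N D : ℕ} (α : ℝ) (x : Fin N × Fin D → ℝ) : ℝ :=
  ∑ k, Fa α (l2norm (blk x k))

/-- Pseudo-inverse `A† = Aᵀ (A Aᵀ)⁻¹` of a full-row-rank matrix. -/
def pinvR {ι κ : Type*} [Fintype ι] [Fintype κ] [DecidableEq ι] (A : Matrix ι κ ℝ) :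
    Matrix κ ι ℝ :=
  Aᵀ * (A * Aᵀ)⁻¹

/-- Pseudo-inverse `A† = (Aᵀ A)⁻¹ Aᵀ` of a full-column-rank matrix. -/
def pinvC {ι κ : Type*} [Fintype ι] [Fintype κ] [DecidableEq κ] (A : Matrix ι κ ℝ) :
    Matrix κ ι ℝ :=
  (Aᵀ * A)⁻¹ * Aᵀ

/-- The submatrix `A_T` formed by the column blocks of `A` indexed by `T`. -/
def subCols {ι : Type*} {N D : ℕ} (A : Matrix ι (Fin N × Fin D) ℝ) (T : Finset (Fin N)) :
    Matrix ι (↥T × Fin D) ℝ :=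
  A.submatrix id (fun p => ((p.1 : Fin N), p.2))

/-- The subvector `x_T` formed by the blocks of `x` indexed by `T`. -/
def subVec {N D : ℕ} (x : Fin N × Fin D → ℝ) (T : Finset (Fin N)) : ↥T × Fin D → ℝ :=
  fun p => x ((p.1 : Fin N), p.2)

/-!
On `L ∩ B(x̄, d)` every block of `x̂` indexed by `T` has norm at least `1/α`, where `F_α = 1`,
and every other block has norm at most `1/α`, where `α w ≤ F_α(w) ≤ 2 α w`. Since
`x̄ + A† v ∈ L ∩ B(x̄, d)` (otherwise `‖x̂ − x̄‖ ≤ d < ‖A† v‖` and there is nothing to prove),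
minimality of `J` gives `∑_{k ∉ T} ‖x̂ₖ‖ ≤ 2 ∑_{k ∉ T} ‖(A† v)ₖ‖ ≤ 2√N ‖A† v‖`, which bounds the
off-support part `u_{Tᶜ}` of `u = x̂ − x̄`. The on-support part is recovered from `A u = v` as
`u_T = A_T† v − A_T† A_{Tᶜ} u_{Tᶜ}`.
-/

section L2Norm

variable {ι : Type*} [Fintype ι]

lemma l2norm_eq_norm_toLp (x : ι → ℝ) : l2norm x = ‖WithLp.toLp 2 x‖ := by
  simp [l2norm, EuclideanSpace.norm_eq, sq_abs]

lemma l2norm_nonneg (x : ι → ℝ) : 0 ≤ l2norm x :=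
  Real.sqrt_nonneg _

lemma sq_l2norm (x : ι → ℝ) : l2norm x ^ 2 = ∑ i, x i ^ 2 :=
  Real.sq_sqrt (Finset.sum_nonneg fun _ _ => sq_nonneg _)

lemma l2norm_sub_le (x y : ι → ℝ) : l2norm (x - y) ≤ l2norm x + l2norm y := by
  simpa only [l2norm_eq_norm_toLp, WithLp.toLp_sub] using norm_sub_le _ _

lemma l2norm_le_l2norm_add_l2norm_sub (x y : ι → ℝ) : l2norm y ≤ l2norm x + l2norm (x - y) := by
  simpa only [l2norm_eq_norm_toLp, WithLp.toLp_sub] using norm_le_norm_add_norm_sub _ _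

lemma l2opNorm_nonneg {κ : Type*} [Fintype κ] [DecidableEq κ] (M : Matrix ι κ ℝ) :
    0 ≤ l2opNorm M :=
  norm_nonneg _

lemma l2norm_mulVec_le {κ : Type*} [Fintype κ] [DecidableEq κ] (M : Matrix ι κ ℝ) (x : κ → ℝ) :
    l2norm (M *ᵥ x) ≤ l2opNorm M * l2norm x := by
  simpa [l2norm_eq_norm_toLp, l2opNorm] using
    (LinearMap.toContinuousLinearMap (Matrix.toEuclideanLin M)).le_opNorm (WithLp.toLp 2 x)

end L2Norm

section Blocks

variable {N D : ℕ}

lemma sq_l2norm_subVec (x : Fin N × Fin D → ℝ) (S : Finset (Fin N)) :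
    l2norm (subVec x S) ^ 2 = ∑ k ∈ S, l2norm (blk x k) ^ 2 := by
  simp only [sq_l2norm, Fintype.sum_prod_type, subVec, blk]
  exact Finset.sum_coe_sort S fun k => ∑ j, x (k, j) ^ 2

lemma sq_l2norm_eq_sum_blk (x : Fin N × Fin D → ℝ) :
    l2norm x ^ 2 = ∑ k, l2norm (blk x k) ^ 2 := by
  simp only [sq_l2norm, Fintype.sum_prod_type, blk]

lemma l2norm_blk_le (x : Fin N × Fin D → ℝ) (k : Fin N) : l2norm (blk x k) ≤ l2norm x := by
  rw [← sq_le_sq₀ (l2norm_nonneg _) (l2norm_nonneg _), sq_l2norm_eq_sum_blk]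
  exact Finset.single_le_sum (fun i _ => sq_nonneg (l2norm (blk x i))) (Finset.mem_univ k)

lemma l2norm_le_subVec_add_subVec_compl (x : Fin N × Fin D → ℝ) (T : Finset (Fin N)) :
    l2norm x ≤ l2norm (subVec x T) + l2norm (subVec x Tᶜ) := by
  have hsplit : l2norm x ^ 2 = l2norm (subVec x T) ^ 2 + l2norm (subVec x Tᶜ) ^ 2 := by
    rw [sq_l2norm_subVec, sq_l2norm_subVec, sq_l2norm_eq_sum_blk, Finset.sum_add_sum_compl]
  rw [← sq_le_sq₀ (l2norm_nonneg _) (add_nonneg (l2norm_nonneg _) (l2norm_nonneg _)), hsplit]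
  nlinarith [l2norm_nonneg (subVec x T), l2norm_nonneg (subVec x Tᶜ)]

lemma l2norm_subVec_le_sum_l2norm_blk (x : Fin N × Fin D → ℝ) (S : Finset (Fin N)) :
    l2norm (subVec x S) ≤ ∑ k ∈ S, l2norm (blk x k) := by
  rw [← sq_le_sq₀ (l2norm_nonneg _) (Finset.sum_nonneg fun k _ => l2norm_nonneg _),
    sq_l2norm_subVec]
  exact Finset.sum_sq_le_sq_sum_of_nonneg fun k _ => l2norm_nonneg _

lemma sum_l2norm_blk_le_sqrt_mul (x : Fin N × Fin D → ℝ) (S : Finset (Fin N)) :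
    ∑ k ∈ S, l2norm (blk x k) ≤ Real.sqrt N * l2norm x := by
  have hcard : (S.card : ℝ) ≤ N := by
    exact_mod_cast (Finset.card_le_univ S).trans_eq (Fintype.card_fin N)
  have hsub : ∑ k ∈ S, l2norm (blk x k) ^ 2 ≤ l2norm x ^ 2 := by
    rw [sq_l2norm_eq_sum_blk]
    exact Finset.sum_le_sum_of_subset_of_nonneg (Finset.subset_univ S) fun k _ _ => sq_nonneg _
  rw [← sq_le_sq₀ (Finset.sum_nonneg fun k _ => l2norm_nonneg _)
    (mul_nonneg (Real.sqrt_nonneg _) (l2norm_nonneg _)), mul_pow, Real.sq_sqrt (Nat.cast_nonneg N)]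
  calc (∑ k ∈ S, l2norm (blk x k)) ^ 2 ≤ S.card * ∑ k ∈ S, l2norm (blk x k) ^ 2 :=
        sq_sum_le_card_mul_sum_sq
    _ ≤ N * l2norm x ^ 2 := mul_le_mul hcard hsub (Finset.sum_nonneg fun k _ => sq_nonneg _)
        (Nat.cast_nonneg N)

lemma mulVec_eq_subCols_add_subCols_compl {ι : Type*} [Fintype ι]
    (A : Matrix ι (Fin N × Fin D) ℝ) (T : Finset (Fin N)) (x : Fin N × Fin D → ℝ) :
    A *ᵥ x = subCols A T *ᵥ subVec x T + subCols A Tᶜ *ᵥ subVec x Tᶜ := by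
  funext i
  simp only [Matrix.mulVec, dotProduct, Pi.add_apply, subCols, subVec, Matrix.submatrix_apply, id,
    Fintype.sum_prod_type]
  rw [Finset.sum_coe_sort T fun k => ∑ j, A i (k, j) * x (k, j),
    Finset.sum_coe_sort Tᶜ fun k => ∑ j, A i (k, j) * x (k, j), Finset.sum_add_sum_compl]

end Blocks

section Fa

variable {α : ℝ}

lemma Fa_le_one (w : ℝ) : Fa α w ≤ 1 := by
  unfold Fa
  split_ifs
  · nlinarith [sq_abs w, sq_nonneg (α * |w| - 1)]
  · exact le_rfl

lemma Fa_eq_one_of_le (hα : 0 < α) {w : ℝ} (hw : 1 / α ≤ w) : Fa α w = 1 := by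
  have hw0 : 0 ≤ w := (one_div_pos.mpr hα).le.trans hw
  unfold Fa
  rw [abs_of_nonneg hw0]
  split_ifs with hle
  · obtain rfl : w = 1 / α := le_antisymm hle hw
    field_simp
    ring
  · rfl

lemma mul_le_Fa (hα : 0 < α) {w : ℝ} (hw0 : 0 ≤ w) (hw : w ≤ 1 / α) : α * w ≤ Fa α w := by
  have hαw : α * w ≤ 1 := by rwa [le_div_iff₀ hα, mul_comm] at hw
  unfold Fa
  rw [abs_of_nonneg hw0, if_pos hw]
  nlinarith [mul_nonneg (mul_nonneg hα.le hw0) (sub_nonneg.mpr hαw)]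

lemma Fa_le_two_mul (hα : 0 < α) {w : ℝ} (hw0 : 0 ≤ w) : Fa α w ≤ 2 * α * w := by
  unfold Fa
  rw [abs_of_nonneg hw0]
  split_ifs with hw
  · nlinarith [sq_nonneg (α * w)]
  · rw [not_le, div_lt_iff₀ hα] at hw
    linarith

lemma sum_compl_l2norm_blk_le_of_J_le {N D : ℕ} (hα : 0 < α) {x y : Fin N × Fin D → ℝ}
    {T : Finset (Fin N)} (hxT : ∀ k ∈ T, 1 / α ≤ l2norm (blk x k))
    (hxTc : ∀ k ∉ T, l2norm (blk x k) ≤ 1 / α) (hJ : J α x ≤ J α y) :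
    ∑ k ∈ Tᶜ, l2norm (blk x k) ≤ 2 * ∑ k ∈ Tᶜ, l2norm (blk y k) := by
  have hx : T.card + α * ∑ k ∈ Tᶜ, l2norm (blk x k) ≤ J α x := by
    rw [_root_.J, ← Finset.sum_add_sum_compl T, Finset.mul_sum,
      Finset.sum_congr rfl fun k hk => Fa_eq_one_of_le hα (hxT k hk), Finset.card_eq_sum_ones,
      Nat.cast_sum, Nat.cast_one]
    exact add_le_add le_rfl (Finset.sum_le_sum fun k hk =>
      mul_le_Fa hα (l2norm_nonneg _) (hxTc k (Finset.mem_compl.mp hk)))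
  have hy : J α y ≤ T.card + 2 * α * ∑ k ∈ Tᶜ, l2norm (blk y k) := by
    rw [_root_.J, ← Finset.sum_add_sum_compl T, Finset.mul_sum, Finset.card_eq_sum_ones,
      Nat.cast_sum, Nat.cast_one]
    exact add_le_add (Finset.sum_le_sum fun k _ => Fa_le_one _)
      (Finset.sum_le_sum fun k _ => Fa_le_two_mul hα (l2norm_nonneg _))
  have : α * ∑ k ∈ Tᶜ, l2norm (blk x k) ≤ α * (2 * ∑ k ∈ Tᶜ, l2norm (blk y k)) := by
    linarith
  exact le_of_mul_le_mul_left this hα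

lemma l2norm_subVec_compl_sub_le_of_J_le {N D : ℕ} (hα : 0 < α)
    {x xbar w : Fin N × Fin D → ℝ} {T : Finset (Fin N)} (hsupp : ∀ k ∉ T, blk xbar k = 0)
    (hxT : ∀ k ∈ T, 1 / α ≤ l2norm (blk x k)) (hxTc : ∀ k ∉ T, l2norm (blk x k) ≤ 1 / α)
    (hJ : J α x ≤ J α (xbar + w)) :
    l2norm (subVec (x - xbar) Tᶜ) ≤ 2 * Real.sqrt N * l2norm w := by
  have hoff : ∀ k ∈ Tᶜ, blk (x - xbar) k = blk x k ∧ blk (xbar + w) k = blk w k := by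
    intro k hk
    have h0 : blk xbar k = 0 := hsupp k (Finset.mem_compl.mp hk)
    exact ⟨show blk x k - blk xbar k = _ by rw [h0, sub_zero],
      show blk xbar k + blk w k = _ by rw [h0, zero_add]⟩
  have hsum := sum_compl_l2norm_blk_le_of_J_le hα hxT hxTc hJ
  rw [Finset.sum_congr rfl fun k hk => congrArg l2norm (hoff k hk).2,
    ← Finset.sum_congr rfl fun k hk => congrArg l2norm (hoff k hk).1] at hsum
  nlinarith [l2norm_subVec_le_sum_l2norm_blk (x - xbar) Tᶜ, sum_l2norm_blk_le_sqrt_mul w Tᶜ]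

end Fa

section PseudoInverse

lemma Matrix.isUnit_of_rank_eq_card {K n : Type*} [Field K] [Fintype n] [DecidableEq n]
    {C : Matrix n n K} (h : C.rank = Fintype.card n) : IsUnit C := by
  rw [← Matrix.mulVec_surjective_iff_isUnit, ← Matrix.coe_mulVecLin, ← LinearMap.range_eq_top]
  exact Submodule.eq_top_of_finrank_eq (h.trans (Module.finrank_fintype_fun_eq_card K).symm)

variable {ι κ : Type*} [Fintype ι] [Fintype κ]

lemma mulVec_pinvR_mulVec [DecidableEq ι] {A : Matrix ι κ ℝ} (hA : A.rank = Fintype.card ι)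
    (v : ι → ℝ) : A *ᵥ (pinvR A *ᵥ v) = v := by
  have hu : IsUnit (A * Aᵀ) :=
    Matrix.isUnit_of_rank_eq_card (by rwa [Matrix.rank_self_mul_transpose])
  rw [Matrix.mulVec_mulVec, pinvR, ← Matrix.mul_assoc,
    Matrix.mul_nonsing_inv _ ((Matrix.isUnit_iff_isUnit_det _).mp hu), Matrix.one_mulVec]

lemma pinvC_mulVec_mulVec [DecidableEq κ] {B : Matrix ι κ ℝ} (hB : B.rank = Fintype.card κ)
    (w : κ → ℝ) : pinvC B *ᵥ (B *ᵥ w) = w := by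
  have hu : IsUnit (Bᵀ * B) :=
    Matrix.isUnit_of_rank_eq_card (by rwa [Matrix.rank_transpose_mul_self])
  rw [Matrix.mulVec_mulVec, pinvC, Matrix.mul_assoc,
    Matrix.nonsing_inv_mul _ ((Matrix.isUnit_iff_isUnit_det _).mp hu), Matrix.one_mulVec]

lemma l2norm_subVec_le_of_mulVec_eq {N D : ℕ} {A : Matrix ι (Fin N × Fin D) ℝ}
    {T : Finset (Fin N)} (hcol : (subCols A T).rank = Fintype.card (↥T × Fin D))
    {u : Fin N × Fin D → ℝ} {v : ι → ℝ} (hu : A *ᵥ u = v) :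
    l2norm (subVec u T) ≤ l2norm (pinvC (subCols A T) *ᵥ v) +
      l2opNorm (pinvC (subCols A T) * subCols A Tᶜ) * l2norm (subVec u Tᶜ) := by
  have huT : subVec u T =
      pinvC (subCols A T) *ᵥ v - (pinvC (subCols A T) * subCols A Tᶜ) *ᵥ subVec u Tᶜ := by
    rw [← hu, mulVec_eq_subCols_add_subCols_compl A T, Matrix.mulVec_add,
      pinvC_mulVec_mulVec hcol, Matrix.mulVec_mulVec, add_sub_cancel_right]
  rw [huT]
  exact (l2norm_sub_le _ _).trans (add_le_add le_rfl (l2norm_mulVec_le _ _))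

end PseudoInverse

lemma blk_bounds_of_l2norm_sub_le {N D : ℕ} {α : ℝ} {x xbar : Fin N × Fin D → ℝ}
    {T : Finset (Fin N)} (hT : T.Nonempty) (hsupp : ∀ k ∉ T, blk xbar k = 0)
    (h : l2norm (x - xbar) ≤ T.inf' hT fun k => min (1 / α) (l2norm (blk xbar k) - 1 / α)) :
    (∀ k ∈ T, 1 / α ≤ l2norm (blk x k)) ∧ ∀ k ∉ T, l2norm (blk x k) ≤ 1 / α := by
  have hdT : ∀ k ∈ T, l2norm (x - xbar) ≤ min (1 / α) (l2norm (blk xbar k) - 1 / α) :=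
    fun k hk => h.trans (Finset.inf'_le _ hk)
  have hblk : ∀ k, l2norm (blk x k - blk xbar k) ≤ l2norm (x - xbar) :=
    fun k => l2norm_blk_le (x - xbar) k
  refine ⟨fun k hk => ?_, fun k hk => ?_⟩
  · have := l2norm_le_l2norm_add_l2norm_sub (blk x k) (blk xbar k)
    linarith [hblk k, min_le_right _ _ |>.trans' (hdT k hk)]
  · obtain ⟨k₀, hk₀⟩ := hT
    have := hblk k
    rw [hsupp k hk, sub_zero] at this
    exact this.trans ((hdT k₀ hk₀).trans (min_le_left _ _))

theorem bzap_stability_general {m N D : ℕ} (A : Matrix (Fin m) (Fin N × Fin D) ℝ)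
    (xbar xhat : Fin N × Fin D → ℝ) (v : Fin m → ℝ) (T : Finset (Fin N)) (hT : T.Nonempty)
    (α : ℝ) (hα : 0 < α)
    (hsupp : ∀ k ∉ T, blk xbar k = 0)
    (hrow : A.rank = m)
    (hcol : (subCols A T).rank = Fintype.card (↥T × Fin D))
    (d : ℝ) (hd : d = T.inf' hT fun k => min (1 / α) (l2norm (blk xbar k) - 1 / α))
    (hfeas : A *ᵥ xhat = A *ᵥ xbar + v)
    (hball : l2norm (xhat - xbar) ≤ d)
    (hmin : ∀ x : Fin N × Fin D → ℝ, A *ᵥ x = A *ᵥ xbar + v → l2norm (x - xbar) ≤ d →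
      J α xhat ≤ J α x) :
    l2norm (xhat - xbar) ≤
      2 * Real.sqrt N * (1 + l2opNorm (pinvC (subCols A T) * subCols A Tᶜ)) *
        l2norm (pinvR A *ᵥ v) + l2norm (pinvC (subCols A T) *ᵥ v) := by
  set w := pinvR A *ᵥ v
  set c := l2opNorm (pinvC (subCols A T) * subCols A Tᶜ)
  have hN : 1 ≤ Real.sqrt N := Real.one_le_sqrt.mpr (by exact_mod_cast hT.choose.pos)
  have hc : 0 ≤ c := l2opNorm_nonneg _
  have hσ := l2norm_nonneg (pinvC (subCols A T) *ᵥ v)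
  by_cases hwd : l2norm w ≤ d
  swap
  · nlinarith [mul_nonneg (by nlinarith : (0 : ℝ) ≤ 2 * Real.sqrt N * (1 + c) - 1)
      (l2norm_nonneg w)]
  obtain ⟨hxT, hxTc⟩ := blk_bounds_of_l2norm_sub_le hT hsupp (hd ▸ hball)
  have hJ := hmin (xbar + w)
    (by rw [Matrix.mulVec_add, mulVec_pinvR_mulVec (by rwa [Fintype.card_fin])])
    (by rwa [add_sub_cancel_left])
  have hcompl := l2norm_subVec_compl_sub_le_of_J_le hα hsupp hxT hxTc hJ
  have hu : A *ᵥ (xhat - xbar) = v := by rw [Matrix.mulVec_sub, hfeas, add_sub_cancel_left]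
  calc l2norm (xhat - xbar)
      ≤ l2norm (subVec (xhat - xbar) T) + l2norm (subVec (xhat - xbar) Tᶜ) :=
        l2norm_le_subVec_add_subVec_compl _ T
    _ ≤ l2norm (pinvC (subCols A T) *ᵥ v) + (1 + c) * l2norm (subVec (xhat - xbar) Tᶜ) := by
        linarith [l2norm_subVec_le_of_mulVec_eq hcol hu]
    _ ≤ l2norm (pinvC (subCols A T) *ᵥ v) + (1 + c) * (2 * Real.sqrt N * l2norm w) := by
        gcongr
    _ = _ := by ring

/-- **Theorem 1 (stability of the local minimum of the BZAP cost function).**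
If `x̂` minimizes `J` over `L ∩ B(x̄, d)`, then
`‖x̂ − x̄‖ ≤ 2√N (1 + ‖A_T† A_{Tᶜ}‖) ‖A† v‖ + ‖A_T† v‖`. -/
theorem bzap_stability {m N D : ℕ} (A : Matrix (Fin m) (Fin N × Fin D) ℝ)
    (xbar xhat : Fin N × Fin D → ℝ) (v : Fin m → ℝ) (T : Finset (Fin N)) (hT : T.Nonempty)
    (α : ℝ) (hα : 0 < α)
    (hsupp : ∀ k ∉ T, blk xbar k = 0)
    (hrow : A.rank = m)
    (hcol : (subCols A T).rank = Fintype.card (↥T × Fin D))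
    (halpha : ∀ k ∈ T, 1 / α < l2norm (blk xbar k))
    (d : ℝ) (hd : d = T.inf' hT fun k => min (1 / α) (l2norm (blk xbar k) - 1 / α))
    (hfeas : A *ᵥ xhat = A *ᵥ xbar + v)
    (hball : l2norm (xhat - xbar) ≤ d)
    (hmin : ∀ x : Fin N × Fin D → ℝ, A *ᵥ x = A *ᵥ xbar + v → l2norm (x - xbar) ≤ d →
      J α xhat ≤ J α x) :
    l2norm (xhat - xbar) ≤
      2 * Real.sqrt N * (1 + l2opNorm (pinvC (subCols A T) * subCols A Tᶜ)) *
        l2norm (pinvR A *ᵥ v) + l2norm (pinvC (subCols A T) *ᵥ v) :=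
  bzap_stability_general A xbar xhat v T hT α hα hsupp hrow hcol d hd hfeas hball hmin
end
end

section
/- Let x̄ ∈ ℝⁿ (n = N·D) be a block-sparse signal with block support T (x̄ₖ = 0 for k ∉ T) and let α > 0 satisfy 1/α < ‖x̄ₖ‖ for all k ∈ T. Set d = min_{k∈T} min(1/α, ‖x̄ₖ‖ − 1/α). Then for every x ∈ B(x̄, d), the cost function satisfies J(x) = |T| + Σ_{k∈T^c} F_α(‖xₖ‖), where |T| is the number of blocks in T. -/
open scoped BigOperators
open Matrix

noncomputable section

/-!
Proof idea: in the ball, every block `k ∈ T` stays at distance at most `d ≤ ‖x̄ₖ‖ - 1/α`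
from `x̄ₖ`, so by the reverse triangle inequality `‖xₖ‖ ≥ 1/α`, where `F_α` is saturated at `1`.
Splitting `J` over `T` and `Tᶜ` then gives `|T|` plus the remaining sum.
-/

section L2Norm

variable {ι : Type*} [Fintype ι]

lemma l2norm_sub_comm (a b : ι → ℝ) : l2norm (a - b) = l2norm (b - a) := by
  simp only [l2norm_eq_norm_toLp, WithLp.toLp_sub, norm_sub_rev]

lemma l2norm_sub_l2norm_le (a b : ι → ℝ) : l2norm a - l2norm b ≤ l2norm (a - b) := by
  simpa only [l2norm_eq_norm_toLp, WithLp.toLp_sub] using norm_sub_norm_le _ _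

end L2Norm

section Blocks

variable {N D : ℕ}

lemma blk_sub (x y : Fin N × Fin D → ℝ) (k : Fin N) : blk (x - y) k = blk x k - blk y k := rfl

lemma l2norm_blk_sub_l2norm_sub_le (x y : Fin N × Fin D → ℝ) (k : Fin N) :
    l2norm (blk y k) - l2norm (x - y) ≤ l2norm (blk x k) := by
  have h := l2norm_sub_l2norm_le (blk y k) (blk x k)
  rw [← blk_sub] at h
  linarith [l2norm_blk_le (y - x) k, l2norm_sub_comm x y]

end Blocks

lemma Fa_eq_one_of_le_abs {α w : ℝ} (hα : α ≠ 0) (hw : 1 / α ≤ |w|) : Fa α w = 1 := by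
  unfold Fa
  split_ifs with h
  · rw [← sq_abs w, le_antisymm h hw]
    field_simp
    norm_num
  · rfl

theorem cost_in_ball_general {N D : ℕ} (xbar : Fin N × Fin D → ℝ)
    (T : Finset (Fin N)) (hT : T.Nonempty) (α : ℝ) (hα : 0 < α)
    (d : ℝ) (hd : d = T.inf' hT fun k => min (1 / α) (l2norm (blk xbar k) - 1 / α))
    (x : Fin N × Fin D → ℝ) (hx : l2norm (x - xbar) ≤ d) :
    J α x = T.card + ∑ k ∈ Tᶜ, Fa α (l2norm (blk x k)) := by
  have hsaturated : ∀ k ∈ T, Fa α (l2norm (blk x k)) = 1 := by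
    intro k hk
    have hdk : d ≤ l2norm (blk xbar k) - 1 / α :=
      hd ▸ (T.inf'_le _ hk).trans (min_le_right _ _)
    have hk_large : 1 / α ≤ l2norm (blk x k) := by
      linarith [l2norm_blk_sub_l2norm_sub_le x xbar k]
    exact Fa_eq_one_of_le_abs hα.ne' (hk_large.trans (le_abs_self _))
  rw [_root_.J, ← Finset.sum_add_sum_compl T, Finset.sum_congr rfl hsaturated]
  simp

/-- In the ball `B(x̄, d)` the cost function reduces to
`J(x) = |T| + ∑_{k ∈ Tᶜ} F_α(‖xₖ‖)`. -/
theorem cost_in_ball {N D : ℕ} (xbar : Fin N × Fin D → ℝ)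
    (T : Finset (Fin N)) (hT : T.Nonempty) (α : ℝ) (hα : 0 < α)
    (hsupp : ∀ k ∉ T, blk xbar k = 0)
    (halpha : ∀ k ∈ T, 1 / α < l2norm (blk xbar k))
    (d : ℝ) (hd : d = T.inf' hT fun k => min (1 / α) (l2norm (blk xbar k) - 1 / α))
    (x : Fin N × Fin D → ℝ) (hx : l2norm (x - xbar) ≤ d) :
    J α x = T.card + ∑ k ∈ Tᶜ, Fa α (l2norm (blk x k)) :=
  cost_in_ball_general xbar T hT α hα d hd x hx
end
end
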